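/- arXiv:1903.01020 — 3 statements merged into one kernel-verified Lean document; each statement's English description precedes it below -/
import Mathlib

section
/- Let (X,σ) be an unbalanced connected magnetic graph. Then the complex linear span of the magnetic atoms m^σ_{uv} = δ_u − σ_{uv} δ_v, taken over all adjacent pairs u ∼ v, equals the whole space ℓ₂(V(X)) of complex-valued functions on V(X). -/
namespace MagneticGraph

variable {V : Type*}

/-- `σ` is a signature on `G`: unimodular on edges and conjugate-symmetric. -/
def IsSignature (G : SimpleGraph V) (σ : V → V → ℂ) : Prop :=
  ∀ u v, G.Adj u v → ‖σ u v‖ = 1 ∧ σ v u = starRingEnd ℂ (σ u v)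

/-- Product of the signature along (the darts of) a walk. -/
def sigProd {G : SimpleGraph V} (σ : V → V → ℂ) {u v : V} (w : G.Walk u v) : ℂ :=
  (w.darts.map fun d => σ d.toProd.1 d.toProd.2).prod

/-- `(X,σ)` is unbalanced: some directed cycle has signature product `≠ 1`. -/
def Unbalanced (G : SimpleGraph V) (σ : V → V → ℂ) : Prop :=
  ∃ (u : V) (w : G.Walk u u), w.IsCycle ∧ sigProd σ w ≠ 1

/-- `(X,σ)` is balanced: every directed cycle has signature product `1`. -/
def Balanced (G : SimpleGraph V) (σ : V → V → ℂ) : Prop :=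
  ∀ (u : V) (w : G.Walk u u), w.IsCycle → sigProd σ w = 1

/-- The σ-Lipschitz (semi)norm `max_{u∼v} |f(u) - σ_{uv} f(v)|`. -/
noncomputable def lipNorm (G : SimpleGraph V) (σ : V → V → ℂ) (f : V → ℂ) : ℝ :=
  sSup {r : ℝ | ∃ u v, G.Adj u v ∧ r = ‖f u - σ u v * f v‖}

/-- The magnetic atom `m^σ_{uv} = δ_u - σ_{uv} δ_v`. -/
def atom [DecidableEq V] (σ : V → V → ℂ) (u v : V) : V → ℂ :=
  fun w => (if w = u then (1 : ℂ) else 0) - σ u v * (if w = v then (1 : ℂ) else 0)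

/-- Membership in the magnetic Arens–Eells space: a finite linear combination of atoms. -/
def InAE [DecidableEq V] (G : SimpleGraph V) (σ : V → V → ℂ) (m : V → ℂ) : Prop :=
  ∃ (n : ℕ) (a : Fin n → ℂ) (p q : Fin n → V),
    (∀ i, G.Adj (p i) (q i)) ∧ m = ∑ i, a i • atom σ (p i) (q i)

/-- The magnetic Arens–Eells norm: infimum of `Σ|aᵢ|` over representations by atoms. -/
noncomputable def aeNorm [DecidableEq V] (G : SimpleGraph V) (σ : V → V → ℂ) (m : V → ℂ) : ℝ :=
  sInf {s : ℝ | ∃ (n : ℕ) (a : Fin n → ℂ) (p q : Fin n → V),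
    (∀ i, G.Adj (p i) (q i)) ∧ m = ∑ i, a i • atom σ (p i) (q i) ∧
    s = ∑ i, ‖a i‖}

/-!
Along a walk `w` from `u` to `v` the atoms telescope: `δ_u - σ(w) δ_v` is a combination of atoms,
where `σ(w)` is the signature product. A closed walk with `σ(w) ≠ 1` therefore puts
`(1 - σ(w)) δ_u`, hence `δ_u`, into the span, and connectivity carries `δ_u` to every `δ_v`.
-/

lemma atom_eq_single_sub_smul_single [DecidableEq V] (σ : V → V → ℂ) (u v : V) :
    atom σ u v = Pi.single u 1 - σ u v • Pi.single v 1 := by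
  funext w
  simp [atom, Pi.single_apply]

lemma sigProd_cons {G : SimpleGraph V} (σ : V → V → ℂ) {u v w : V} (h : G.Adj u v)
    (p : G.Walk v w) : sigProd σ (.cons h p) = σ u v * sigProd σ p := by
  simp [sigProd]

/-- The magnetic Arens–Eells space `AE_σ(X)`. -/
def atomSpan [DecidableEq V] (G : SimpleGraph V) (σ : V → V → ℂ) : Submodule ℂ (V → ℂ) :=
  Submodule.span ℂ {m : V → ℂ | ∃ u v, G.Adj u v ∧ m = atom σ u v}

section atomSpan

variable [DecidableEq V] {G : SimpleGraph V} {σ : V → V → ℂ}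

lemma atom_mem_atomSpan {u v : V} (h : G.Adj u v) : atom σ u v ∈ atomSpan G σ :=
  Submodule.subset_span ⟨u, v, h, rfl⟩

lemma single_sub_sigProd_smul_single_mem_atomSpan {u v : V} (w : G.Walk u v) :
    Pi.single u 1 - sigProd σ w • Pi.single v 1 ∈ atomSpan G σ := by
  induction w with
  | nil => simp [sigProd]
  | @cons a b c h p ih =>
    have hsplit : Pi.single a 1 - sigProd σ (.cons h p) • Pi.single c 1 =
        atom σ a b + σ a b • (Pi.single b 1 - sigProd σ p • Pi.single c 1 : V → ℂ) := by
      rw [sigProd_cons, atom_eq_single_sub_smul_single]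
      module
    rw [hsplit]
    exact add_mem (atom_mem_atomSpan h) (Submodule.smul_mem _ _ ih)

lemma single_mem_atomSpan_of_sigProd_ne_one {u : V} (w : G.Walk u u) (hw : sigProd σ w ≠ 1) :
    Pi.single u 1 ∈ atomSpan G σ := by
  have hmem : (1 - sigProd σ w) • (Pi.single u 1 : V → ℂ) ∈ atomSpan G σ := by
    rw [sub_smul, one_smul]
    exact single_sub_sigProd_smul_single_mem_atomSpan w
  simpa [smul_smul, inv_mul_cancel₀ (sub_ne_zero.mpr hw.symm)] using
    Submodule.smul_mem _ (1 - sigProd σ w)⁻¹ hmem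

lemma single_mem_atomSpan_of_reachable {u v : V} (huv : G.Reachable v u)
    (hu : Pi.single u 1 ∈ atomSpan G σ) : Pi.single v 1 ∈ atomSpan G σ := by
  obtain ⟨p⟩ := huv
  simpa using add_mem (single_sub_sigProd_smul_single_mem_atomSpan p)
    (Submodule.smul_mem _ (sigProd σ p) hu)

end atomSpan

theorem stmt3_general {V : Type*} [Fintype V] [DecidableEq V] (G : SimpleGraph V) (σ : V → V → ℂ)
    (hconn : G.Connected) (hunb : Unbalanced G σ) :
    Submodule.span ℂ {m : V → ℂ | ∃ u v, G.Adj u v ∧ m = atom σ u v} = ⊤ := by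
  change atomSpan G σ = ⊤
  obtain ⟨u, w, -, hw⟩ := hunb
  have hu := single_mem_atomSpan_of_sigProd_ne_one w hw
  rw [eq_top_iff, ← (Pi.basisFun ℂ V).span_eq, Submodule.span_le]
  rintro _ ⟨v, rfl⟩
  simpa using single_mem_atomSpan_of_reachable (hconn v u) hu

/-- for an unbalanced connected magnetic graph, the magnetic atoms span
all of `ℓ₂(V(X)) = ℂ^{V(X)}`. -/
theorem stmt3 {V : Type*} [Fintype V] [DecidableEq V] (G : SimpleGraph V) (σ : V → V → ℂ)
    (hσ : IsSignature G σ) (hconn : G.Connected) (hunb : Unbalanced G σ) :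
    Submodule.span ℂ {m : V → ℂ | ∃ u v, G.Adj u v ∧ m = atom σ u v} = ⊤ :=
  stmt3_general G σ hconn hunb

end MagneticGraph
end

section
/- Let (X,σ) be an unbalanced magnetic graph and f: V(X) → ℂ with ‖f‖_{Lip_σ} ≤ 1. Let H_f be the magnetic graph on V(X) whose edges are the σ-satisfied edges of f (edges {u,v} with |f(u) − σ_{uv} f(v)| = 1), with signature the restriction of σ. If every connected component of H_f is unbalanced, then f is an extreme point of the unit ball of Lip_σ(X). -/
namespace MagneticGraph

variable {V : Type*}

/-- `f` is an extreme point of the unit ball of `Lip_σ(X)`. -/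
def ExtremePt (G : SimpleGraph V) (σ : V → V → ℂ) (f : V → ℂ) : Prop :=
  lipNorm G σ f ≤ 1 ∧
  ∀ g : V → ℂ, (∀ t : ℝ, t ∈ Set.Icc (-1 : ℝ) 1 → lipNorm G σ (f + t • g) ≤ 1) → g = 0

/-- The graph `H_f` of σ-satisfied edges of `f`. -/
def satGraph (G : SimpleGraph V) (σ : V → V → ℂ) (f : V → ℂ) : SimpleGraph V :=
  SimpleGraph.fromRel fun u v => G.Adj u v ∧ ‖f u - σ u v * f v‖ = 1

/-- Every connected component of `H` is unbalanced: each vertex can reach an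
unbalanced cycle within `H`. -/
def AllComponentsUnbalanced (H : SimpleGraph V) (σ : V → V → ℂ) : Prop :=
  ∀ u : V, ∃ (x : V) (w : H.Walk x x), H.Reachable u x ∧ w.IsCycle ∧ sigProd σ w ≠ 1

/-!
Let `g` be a direction such that `f + t g` stays in the unit ball for all `t ∈ [-1, 1]`.
On a σ-satisfied edge the value `z = f u - σ_{uv} f v` lies on the unit circle while `z ± w`,
with `w = g u - σ_{uv} g v`, stay in the unit disc; by strict convexity of the disc
(the parallelogram law) `w = 0`. Hence `g u = σ_{uv} g v` along every edge of `H_f`, and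
transporting along a cycle `C` of `H_f` gives `g x = σ(C) g x`, so `g x = 0` when `σ(C) ≠ 1`.
Transporting once more along a path to that cycle shows `g` vanishes on the whole component.
-/

theorem eq_zero_of_norm_add_le_of_norm_sub_le {E : Type*} [NormedAddCommGroup E]
    [InnerProductSpace ℝ E] {z w : E} (h_add : ‖z + w‖ ≤ ‖z‖) (h_sub : ‖z - w‖ ≤ ‖z‖) :
    w = 0 := by
  have h_par := parallelogram_law_with_norm ℝ z w
  have h_add_sq : ‖z + w‖ ^ 2 ≤ ‖z‖ ^ 2 := pow_le_pow_left₀ (norm_nonneg _) h_add 2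
  have h_sub_sq : ‖z - w‖ ^ 2 ≤ ‖z‖ ^ 2 := pow_le_pow_left₀ (norm_nonneg _) h_sub 2
  have : ‖w‖ ^ 2 ≤ 0 := by linarith
  exact norm_eq_zero.mp (pow_eq_zero_iff two_ne_zero |>.mp (le_antisymm this (sq_nonneg _)))

theorem norm_sub_mul_le_lipNorm {V : Type*} [Finite V] (G : SimpleGraph V) (σ : V → V → ℂ)
    (f : V → ℂ) {u v : V} (h : G.Adj u v) : ‖f u - σ u v * f v‖ ≤ lipNorm G σ f := by
  refine le_csSup ?_ ⟨u, v, h, rfl⟩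
  refine ((Set.finite_range fun p : V × V => ‖f p.1 - σ p.1 p.2 * f p.2‖).subset ?_).bddAbove
  rintro r ⟨a, b, -, rfl⟩
  exact ⟨(a, b), rfl⟩

theorem IsSignature.mul_swap_eq_one {V : Type*} {G : SimpleGraph V} {σ : V → V → ℂ}
    (hσ : IsSignature G σ) {u v : V} (h : G.Adj u v) : σ u v * σ v u = 1 := by
  obtain ⟨h_norm, h_conj⟩ := hσ u v h
  rw [h_conj, Complex.mul_conj', h_norm]
  norm_num

/-- Reading `σ` as a `U(1)`-connection on `H`, these are its flat sections. -/
def IsFlatSection {V : Type*} (H : SimpleGraph V) (σ : V → V → ℂ) (g : V → ℂ) : Prop :=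
  ∀ u v, H.Adj u v → g u = σ u v * g v

section FlatSection

variable {V : Type*} {H : SimpleGraph V} {σ : V → V → ℂ} {g : V → ℂ}

theorem IsFlatSection.eq_sigProd_mul (hg : IsFlatSection H σ g) {u x : V} (w : H.Walk u x) :
    g u = sigProd σ w * g x := by
  induction w with
  | nil => simp [sigProd]
  | cons h p ih =>
    simp only [sigProd, SimpleGraph.Walk.darts_cons, List.map_cons, List.prod_cons] at ih ⊢
    rw [hg _ _ h, ih, mul_assoc]

theorem IsFlatSection.eq_zero_of_sigProd_ne_one (hg : IsFlatSection H σ g) {x : V}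
    (w : H.Walk x x) (hw : sigProd σ w ≠ 1) : g x = 0 := by
  have h_loop : (sigProd σ w - 1) * g x = 0 := by
    rw [sub_mul, one_mul, ← hg.eq_sigProd_mul w, sub_self]
  exact (mul_eq_zero.mp h_loop).resolve_left (sub_ne_zero.mpr hw)

theorem IsFlatSection.eq_zero (hg : IsFlatSection H σ g) (hH : AllComponentsUnbalanced H σ) :
    g = 0 := by
  funext u
  obtain ⟨x, w, ⟨p⟩, -, hw⟩ := hH u
  rw [hg.eq_sigProd_mul p, hg.eq_zero_of_sigProd_ne_one w hw, mul_zero, Pi.zero_apply]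

end FlatSection

section Perturbation

variable {V : Type*} [Finite V] {G : SimpleGraph V} {σ : V → V → ℂ} {f g : V → ℂ}

theorem eq_mul_of_norm_sub_mul_eq_one
    (hg : ∀ t : ℝ, t ∈ Set.Icc (-1 : ℝ) 1 → lipNorm G σ (f + t • g) ≤ 1)
    {u v : V} (h : G.Adj u v) (h_sat : ‖f u - σ u v * f v‖ = 1) : g u = σ u v * g v := by
  have h_edge : ∀ t : ℝ, t ∈ Set.Icc (-1 : ℝ) 1 →
      ‖(f u - σ u v * f v) + t • (g u - σ u v * g v)‖ ≤ ‖f u - σ u v * f v‖ := by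
    intro t ht
    have h_eq : (f + t • g) u - σ u v * (f + t • g) v
        = (f u - σ u v * f v) + t • (g u - σ u v * g v) := by
      simp only [Pi.add_apply, Pi.smul_apply, Complex.real_smul]
      ring
    rw [h_sat, ← h_eq]
    exact (norm_sub_mul_le_lipNorm G σ _ h).trans (hg t ht)
  have h_add := h_edge 1 ⟨by norm_num, le_rfl⟩
  have h_sub := h_edge (-1) ⟨le_rfl, by norm_num⟩
  rw [one_smul] at h_add
  rw [neg_smul, one_smul, ← sub_eq_add_neg] at h_sub
  exact sub_eq_zero.mp (eq_zero_of_norm_add_le_of_norm_sub_le h_add h_sub)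

theorem isFlatSection_satGraph (hσ : IsSignature G σ)
    (hg : ∀ t : ℝ, t ∈ Set.Icc (-1 : ℝ) 1 → lipNorm G σ (f + t • g) ≤ 1) :
    IsFlatSection (satGraph G σ f) σ g := by
  intro u v huv
  obtain ⟨-, ⟨h, h_sat⟩ | ⟨h, h_sat⟩⟩ := (SimpleGraph.fromRel_adj _ u v).mp huv
  · exact eq_mul_of_norm_sub_mul_eq_one hg h h_sat
  · rw [eq_mul_of_norm_sub_mul_eq_one hg h h_sat, ← mul_assoc, hσ.mul_swap_eq_one h.symm,
      one_mul]

end Perturbation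

theorem stmt6_general {V : Type*} [Fintype V] (G : SimpleGraph V) (σ : V → V → ℂ)
    (hσ : IsSignature G σ) (f : V → ℂ) (hf : lipNorm G σ f ≤ 1)
    (hH : AllComponentsUnbalanced (satGraph G σ f) σ) :
    ExtremePt G σ f :=
  ⟨hf, fun _ hg => (isFlatSection_satGraph hσ hg).eq_zero hH⟩

/-- if every connected component of the satisfied graph `H_f` is unbalanced,
then `f` is an extreme point of the unit ball of `Lip_σ(X)`. -/
theorem stmt6 {V : Type*} [Fintype V] (G : SimpleGraph V) (σ : V → V → ℂ)
    (hσ : IsSignature G σ) (hunb : Unbalanced G σ) (f : V → ℂ) (hf : lipNorm G σ f ≤ 1)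
    (hH : AllComponentsUnbalanced (satGraph G σ f) σ) :
    ExtremePt G σ f :=
  stmt6_general G σ hσ f hf hH

end MagneticGraph
end

section
/- Let (X,σ) be a magnetic graph with σ taking values in the group S¹_p of p-th roots of unity, and let X̂ be its lift graph. The compression map 𝒞: AE(X̂) → AE_σ(X), defined by (𝒞m)(u) = Σ_{ξ ∈ S¹_p} ξ · m(u, ξ), is a surjective linear map, and for adjacent lift vertices (u, ω) and (v, ωσ_{uv}) it satisfies 𝒞(m_{(u,ω),(v,ωσ_{uv})}) = ω · m^σ_{uv}. -/
namespace MagneticGraph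

variable {V : Type*}

/-- The lift graph of `(X,σ)` on vertex set `V × S¹_p`: `(u,ω) ∼ (v,ω')` iff
`u ∼ v` and `ω' = ω σ_{uv}`. -/
def liftGraph (G : SimpleGraph V) (σ : V → V → ℂ) (p : ℕ) :
    SimpleGraph (V × rootsOfUnity p ℂ) :=
  SimpleGraph.fromRel fun a b =>
    G.Adj a.1 b.1 ∧ ((b.2 : ℂˣ) : ℂ) = ((a.2 : ℂˣ) : ℂ) * σ a.1 b.1

/-- The trivial signature. -/
def triv {W : Type*} : W → W → ℂ := fun _ _ => 1

/-- The compression map `(𝒞 m)(u) = Σ_{ξ ∈ S¹_p} ξ · m(u,ξ)`. -/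
noncomputable def compress {V : Type*} (p : ℕ) [NeZero p] (m : V × rootsOfUnity p ℂ → ℂ) : V → ℂ :=
  haveI := Fintype.ofFinite (rootsOfUnity p ℂ)
  fun u => ∑ ξ : rootsOfUnity p ℂ, ((ξ : ℂˣ) : ℂ) * m (u, ξ)

section Compression

variable {V : Type*} (p : ℕ) [NeZero p]

noncomputable def compressₗ : (V × rootsOfUnity p ℂ → ℂ) →ₗ[ℂ] (V → ℂ) where
  toFun := compress p
  map_add' m₁ m₂ := by
    funext u
    simp only [compress, Pi.add_apply, mul_add, Finset.sum_add_distrib]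
  map_smul' a m := by
    funext u
    simp only [compress, Pi.smul_apply, smul_eq_mul, RingHom.id_apply, Finset.mul_sum,
      mul_left_comm]

@[simp]
lemma compressₗ_apply (m : V × rootsOfUnity p ℂ → ℂ) : compressₗ p m = compress p m := rfl

lemma compress_indicator [DecidableEq V] (w : V) (ω : rootsOfUnity p ℂ) :
    compress p (fun x => if x = (w, ω) then 1 else 0) =
      fun u => if u = w then ((ω : ℂˣ) : ℂ) else 0 := by
  funext u
  by_cases h : u = w <;> simp [compress, h, Prod.ext_iff]

lemma compress_atom_triv [DecidableEq V] (σ : V → V → ℂ) (u v : V) {ω ω' : rootsOfUnity p ℂ}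
    (h : ((ω' : ℂˣ) : ℂ) = ((ω : ℂˣ) : ℂ) * σ u v) :
    compress p (atom triv (u, ω) (v, ω')) = ((ω : ℂˣ) : ℂ) • atom σ u v := by
  have hatom : atom triv (u, ω) (v, ω') =
      (fun x => if x = (u, ω) then 1 else 0) - fun x => if x = (v, ω') then 1 else 0 := by
    funext x
    simp [atom, triv]
  rw [hatom, ← compressₗ_apply, map_sub, compressₗ_apply, compressₗ_apply,
    compress_indicator, compress_indicator, h]
  funext x
  simp only [Pi.sub_apply, Pi.smul_apply, smul_eq_mul, atom, mul_ite, mul_one, mul_zero]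
  split_ifs <;> ring

end Compression

lemma liftGraph_adj_of_adj {V : Type*} {G : SimpleGraph V} {σ : V → V → ℂ} {p : ℕ} {u v : V}
    (huv : G.Adj u v) {ω ω' : rootsOfUnity p ℂ} (h : ((ω' : ℂˣ) : ℂ) = ((ω : ℂˣ) : ℂ) * σ u v) :
    (liftGraph G σ p).Adj (u, ω) (v, ω') :=
  (SimpleGraph.fromRel_adj _ _ _).2 ⟨fun he => huv.ne (congrArg Prod.fst he), Or.inl ⟨huv, h⟩⟩

/-- Each atom `m^σ_{st}` is the compression of the lift atom from `(s, 1)` to `(t, σ_{st})`. -/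
lemma exists_inAE_liftGraph_compress_eq {V : Type*} [DecidableEq V] {G : SimpleGraph V}
    {σ : V → V → ℂ} {p : ℕ} [NeZero p] (hval : ∀ u v, G.Adj u v → σ u v ^ p = 1)
    {m : V → ℂ} (hm : InAE G σ m) :
    ∃ m' : V × rootsOfUnity p ℂ → ℂ, InAE (liftGraph G σ p) triv m' ∧ compress p m' = m := by
  obtain ⟨n, a, s, t, hadj, rfl⟩ := hm
  let ω i : rootsOfUnity p ℂ := rootsOfUnity.mkOfPowEq _ (hval _ _ (hadj i))
  have hω i : ((ω i : ℂˣ) : ℂ) = ((1 : rootsOfUnity p ℂ) : ℂˣ) * σ (s i) (t i) := by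
    simp [ω]
  refine ⟨∑ i, a i • atom triv (s i, 1) (t i, ω i),
    ⟨n, a, fun i => (s i, 1), fun i => (t i, ω i), fun i => liftGraph_adj_of_adj (hadj i) (hω i),
      rfl⟩, ?_⟩
  rw [← compressₗ_apply, map_sum]
  refine Finset.sum_congr rfl fun i _ => ?_
  rw [map_smul, compressₗ_apply, compress_atom_triv p σ _ _ (hω i)]
  simp

theorem stmt9_general {V : Type*} [DecidableEq V] (G : SimpleGraph V) (σ : V → V → ℂ)
    (p : ℕ) [NeZero p]
    (hval : ∀ u v, G.Adj u v → σ u v ^ p = 1) :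
    (∀ (a : ℂ) (m₁ m₂ : V × rootsOfUnity p ℂ → ℂ),
      compress p (a • m₁ + m₂) = a • compress p m₁ + compress p m₂) ∧
    (∀ m : V → ℂ, InAE G σ m →
      ∃ m' : V × rootsOfUnity p ℂ → ℂ,
        InAE (liftGraph G σ p) triv m' ∧ compress p m' = m) ∧
    (∀ u v, G.Adj u v → ∀ ω ω' : rootsOfUnity p ℂ,
      ((ω' : ℂˣ) : ℂ) = ((ω : ℂˣ) : ℂ) * σ u v →
      compress p (atom triv (u, ω) (v, ω')) = ((ω : ℂˣ) : ℂ) • atom σ u v) :=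
  ⟨fun a m₁ m₂ => by simp only [← compressₗ_apply, map_add, map_smul],
    fun _ hm => exists_inAE_liftGraph_compress_eq hval hm,
    fun u v _ _ _ h => compress_atom_triv p σ u v h⟩

/-- the compression map is linear, surjective from `AE(X̂)` onto `AE_σ(X)`,
and sends the classical atom `m_{(u,ω),(v,ωσ_{uv})}` to `ω · m^σ_{uv}`. -/
theorem stmt9 {V : Type*} [Fintype V] [DecidableEq V] (G : SimpleGraph V) (σ : V → V → ℂ)
    (p : ℕ) [NeZero p] (hσ : IsSignature G σ)
    (hval : ∀ u v, G.Adj u v → σ u v ^ p = 1) :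
    (∀ (a : ℂ) (m₁ m₂ : V × rootsOfUnity p ℂ → ℂ),
      compress p (a • m₁ + m₂) = a • compress p m₁ + compress p m₂) ∧
    (∀ m : V → ℂ, InAE G σ m →
      ∃ m' : V × rootsOfUnity p ℂ → ℂ,
        InAE (liftGraph G σ p) triv m' ∧ compress p m' = m) ∧
    (∀ u v, G.Adj u v → ∀ ω ω' : rootsOfUnity p ℂ,
      ((ω' : ℂˣ) : ℂ) = ((ω : ℂˣ) : ℂ) * σ u v →
      compress p (atom triv (u, ω) (v, ω')) = ((ω : ℂˣ) : ℂ) • atom σ u v) :=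
  stmt9_general G σ p hval

end MagneticGraph
end
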